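/- arXiv:2505.09244 — 6 statements merged into one kernel-verified Lean document; each statement's English description precedes it below -/
import Mathlib

section
/- Let α be a type, let L, L', m, M : α → ℝ be functions, and let t, lmax be real numbers with 0 < t. Assume (1) for all x, L(x) + m(x)·t ≤ L'(x); (2) for all x, L'(x) ≤ L(x) + M(x)·t; and (3) for all x, M(x) < m(x) or M(x) ≤ 0. Then for every x, if L(x) ≤ lmax then L'(x) ≤ lmax. -/
theorem generated_constraint_sound {α : Type*} (L L' m M : α → ℝ) (t lmax : ℝ)
    (ht : 0 < t)
    (h1 : ∀ x, L x + m x * t ≤ L' x)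
    (h2 : ∀ x, L' x ≤ L x + M x * t)
    (h3 : ∀ x, M x < m x ∨ M x ≤ 0) :
    ∀ x, L x ≤ lmax → L' x ≤ lmax := by
  intro x hx
  rcases h3 x with h | h
  · nlinarith [h1 x, h2 x]
  · nlinarith [h2 x]
end

section
/- Let n be an integer, let t0, t1, in0, omin, La, Lo be real numbers, and let l, lp, infl, out : ℤ → ℝ be functions. Assume: t0 < t1; 0 < in0; 0 ≤ omin; 0 ≤ out(i) for all i; 0 < La; La < Lo; infl(1) = in0; for every i with 2 ≤ i ≤ n, infl(i) = out(i−1); for every i with 1 ≤ i ≤ n: if l(i) < La then out(i) = 0, and if La ≤ l(i) then omin ≤ out(i); for every i with 1 ≤ i ≤ n, lp(i) = l(i) + (infl(i) − out(i))·(t1 − t0); and for every i with 1 ≤ i ≤ n, l(i) ≤ Lo. Assume further the generated constraint: for every integer i, at least one of the following holds: (a) i < 1; (b) n < i; (c) in0·t0 − in0·t1 − La + Lo ≥ 0 and i = 1 and out(i) < omin; (d) 2 ≤ i and out(i) < omin and out(i−1)·t0 − out(i−1)·t1 − La + Lo ≥ 0; (e) 2 ≤ i and out(i−1) < omin; (f)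 2 ≤ i and out(i−1) ≤ out(i); (g) i = 1 and in0 ≤ out(i); (h) 0 < out(i) and out(i) < omin. Then lp(i) ≤ Lo for every i with 1 ≤ i ≤ n. -/
theorem cascaded_water_tanks_constraint_sound
    (n : ℤ) (t0 t1 in0 omin La Lo : ℝ) (l lp infl out : ℤ → ℝ)
    (ht : t0 < t1)
    (hin0 : 0 < in0)
    (homin : 0 ≤ omin)
    (hout : ∀ i, 0 ≤ out i)
    (hLa : 0 < La)
    (hLaLo : La < Lo)
    (hinfl1 : infl 1 = in0)
    (hinfl : ∀ i, 2 ≤ i → i ≤ n → infl i = out (i - 1))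
    (hout0 : ∀ i, 1 ≤ i → i ≤ n → l i < La → out i = 0)
    (houtmin : ∀ i, 1 ≤ i → i ≤ n → La ≤ l i → omin ≤ out i)
    (hupd : ∀ i, 1 ≤ i → i ≤ n → lp i = l i + (infl i - out i) * (t1 - t0))
    (hsafe : ∀ i, 1 ≤ i → i ≤ n → l i ≤ Lo)
    (hconstraint : ∀ i : ℤ,
      i < 1 ∨
      n < i ∨
      (in0 * t0 - in0 * t1 - La + Lo ≥ 0 ∧ i = 1 ∧ out i < omin) ∨
      (2 ≤ i ∧ out i < omin ∧ out (i - 1) * t0 - out (i - 1) * t1 - La + Lo ≥ 0) ∨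
      (2 ≤ i ∧ out (i - 1) < omin) ∨
      (2 ≤ i ∧ out (i - 1) ≤ out i) ∨
      (i = 1 ∧ in0 ≤ out i) ∨
      (0 < out i ∧ out i < omin)) :
    ∀ i, 1 ≤ i → i ≤ n → lp i ≤ Lo := by
  intro i h1 hn
  have hup := hupd i h1 hn
  have hsi := hsafe i h1 hn
  have htt : 0 < t1 - t0 := by linarith
  rcases hconstraint i with h | h | ⟨hc, hi1, hco⟩ | ⟨h2, ho, hb⟩ | ⟨h2, ho⟩ | ⟨h2, ho⟩ | ⟨hi1, ho⟩ | ⟨hpos, ho⟩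
  · omega
  · omega
  · subst hi1
    have hl : l 1 < La := by
      by_contra h'; push_neg at h'
      have := houtmin 1 h1 hn h'; linarith
    have h0 : out 1 = 0 := hout0 1 h1 hn hl
    rw [hup, hinfl1, h0]
    nlinarith
  · have hl : l i < La := by
      by_contra h'; push_neg at h'
      have := houtmin i h1 hn h'; linarith
    have h0 : out i = 0 := hout0 i h1 hn hl
    rw [hup, hinfl i h2 hn, h0]
    nlinarith
  · have h1' : (1:ℤ) ≤ i - 1 := by omega
    have hn' : i - 1 ≤ n := by omega
    rcases lt_or_ge (l (i - 1)) La with hl | hl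
    · have h0 : out (i - 1) = 0 := hout0 _ h1' hn' hl
      rw [hup, hinfl i h2 hn, h0]
      nlinarith [hout i]
    · have := houtmin _ h1' hn' hl; linarith
  · rw [hup, hinfl i h2 hn]
    nlinarith [hout (i - 1)]
  · subst hi1
    rw [hup, hinfl1]
    nlinarith
  · rcases lt_or_ge (l i) La with hl | hl
    · have := hout0 i h1 hn hl; linarith
    · have := houtmin i h1 hn hl; linarith
end

section
/- Let p, pf, pp, pfp : ℤ → ℝ be functions and let vmin, vmax, t0, t1, dsafe, dappr, drec be real numbers with t0 < t1. Assume: (1) for all i, if dappr ≤ pf(i) − p(i) then pfp(i) − pp(i) ≤ pf(i) − p(i); (2) for all i, if dappr ≤ pf(i) − p(i) then pp(i) ≤ p(i) + vmax·(t1 − t0); (3) for all i, if dappr ≤ pf(i) − p(i) then dappr ≤ pfp(i) − pp(i); (4) for all i, if pf(i) − p(i) ≤ drec then pf(i) − p(i) ≤ pfp(i) − pp(i); (5) for all i, if pf(i) − p(i) ≤ drec then p(i) + vmin·(t1 − t0) ≤ pp(i); (6) for all i, if pf(i) − p(i) ≤ drec then pfp(i) − pp(i) ≤ drec; and (7) for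 all i, dsafe ≤ pf(i) − p(i). If dsafe ≤ dappr and (dappr = dsafe or dappr ≤ drec), then dsafe ≤ pfp(i) − pp(i) for all i. -/
theorem cars_flow_constraint_sound
    (p pf pp pfp : ℤ → ℝ) (vmin vmax t0 t1 dsafe dappr drec : ℝ)
    (ht : t0 < t1)
    (h1 : ∀ i, dappr ≤ pf i - p i → pfp i - pp i ≤ pf i - p i)
    (h2 : ∀ i, dappr ≤ pf i - p i → pp i ≤ p i + vmax * (t1 - t0))
    (h3 : ∀ i, dappr ≤ pf i - p i → dappr ≤ pfp i - pp i)
    (h4 : ∀ i, pf i - p i ≤ drec → pf i - p i ≤ pfp i - pp i)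
    (h5 : ∀ i, pf i - p i ≤ drec → p i + vmin * (t1 - t0) ≤ pp i)
    (h6 : ∀ i, pf i - p i ≤ drec → pfp i - pp i ≤ drec)
    (h7 : ∀ i, dsafe ≤ pf i - p i)
    (hc : dsafe ≤ dappr ∧ (dappr = dsafe ∨ dappr ≤ drec)) :
    ∀ i, dsafe ≤ pfp i - pp i := by
  intro i
  by_cases h : dappr ≤ pf i - p i
  · exact hc.1.trans (h3 i h)
  · push_neg at h
    rcases hc.2 with heq | hle
    · exact absurd (heq ▸ h) (not_lt.2 (h7 i))
    · exact (h7 i).trans (h4 i (le_of_lt (h.trans_le hle)))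
end

section
/- Let vmin, vmax, t0, t1, dsafe, dappr, drec be real numbers with t0 < t1. Then the following are equivalent: (I) dsafe ≤ dappr and (dappr = dsafe or dappr ≤ drec); (II) for all functions p, pf, pp, pfp : ℤ → ℝ satisfying (1) for all i, if dappr ≤ pf(i) − p(i) then pfp(i) − pp(i) ≤ pf(i) − p(i); (2) for all i, if dappr ≤ pf(i) − p(i) then pp(i) ≤ p(i) + vmax·(t1 − t0); (3) for all i, if dappr ≤ pf(i) − p(i) then dappr ≤ pfp(i) − pp(i); (4) for all i, if pf(i) − p(i) ≤ drec then pf(i) − p(i) ≤ pfp(i) − pp(i); (5) for all i, if pf(i) − p(i) ≤ drec then p(i) + vmin·(t1 − t0) ≤ pp(i); (6) for all i, if pf(i) − p(i) ≤ drec then pfp(i) − pp(i) ≤ drec; and (7) for all i, dsafe ≤ pf(i) − p(i); it holds that dsafe ≤ pfp(i) − pp(i) for all i. -/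
theorem cars_flow_constraint_weakest
    (vmin vmax t0 t1 dsafe dappr drec : ℝ) (ht : t0 < t1) :
    (dsafe ≤ dappr ∧ (dappr = dsafe ∨ dappr ≤ drec)) ↔
    (∀ p pf pp pfp : ℤ → ℝ,
      (∀ i, dappr ≤ pf i - p i → pfp i - pp i ≤ pf i - p i) →
      (∀ i, dappr ≤ pf i - p i → pp i ≤ p i + vmax * (t1 - t0)) →
      (∀ i, dappr ≤ pf i - p i → dappr ≤ pfp i - pp i) →
      (∀ i, pf i - p i ≤ drec → pf i - p i ≤ pfp i - pp i) →
      (∀ i, pf i - p i ≤ drec → p i + vmin * (t1 - t0) ≤ pp i) →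
      (∀ i, pf i - p i ≤ drec → pfp i - pp i ≤ drec) →
      (∀ i, dsafe ≤ pf i - p i) →
      ∀ i, dsafe ≤ pfp i - pp i) := by
  constructor
  · rintro ⟨h1, h2⟩ p pf pp pfp hA hB hC hD hE hF hG i
    rcases le_or_gt dappr (pf i - p i) with h | h
    · have := hC i h
      linarith
    · rcases h2 with h2 | h2
      · have := hG i
        linarith
      · have hd : pf i - p i ≤ drec := by linarith
        have := hD i hd
        have := hG i
        linarith
  · intro H
    have hd : dsafe ≤ dappr := by
      by_contra h
      push_neg at h
      have key := H (fun _ => 0) (fun _ => max dsafe (drec + 1))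
        (fun _ => min 0 (vmax * (t1 - t0)))
        (fun _ => min 0 (vmax * (t1 - t0)) + dappr)
        (fun i _ => by
          have := le_max_left dsafe (drec + 1)
          linarith)
        (fun i _ => by
          have := min_le_right 0 (vmax * (t1 - t0))
          linarith)
        (fun i _ => by simp)
        (fun i hi => by
          have := le_max_right dsafe (drec + 1)
          linarith)
        (fun i hi => by
          have := le_max_right dsafe (drec + 1)
          linarith)
        (fun i hi => by
          have := le_max_right dsafe (drec + 1)
          linarith)
        (fun i => by
          have := le_max_left dsafe (drec + 1)
          linarith)
        0
      linarith
    refine ⟨hd, ?_⟩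
    by_contra h
    push_neg at h
    obtain ⟨hne, hrec⟩ := h
    have hlt : dsafe < dappr := lt_of_le_of_ne hd (fun e => hne e.symm)
    have hmid1 : drec < (drec + dappr) / 2 := by linarith
    have hmid2 : (drec + dappr) / 2 < dappr := by linarith
    have key := H (fun _ => 0) (fun _ => max dsafe ((drec + dappr) / 2))
      (fun _ => 0) (fun _ => dsafe - 1)
      (fun i hi => by
        have h1 := le_max_left dsafe ((drec + dappr) / 2)
        have h2 := max_lt hlt hmid2
        linarith)
      (fun i hi => by
        have h2 := max_lt hlt hmid2
        linarith)
      (fun i hi => by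
        have h2 := max_lt hlt hmid2
        linarith)
      (fun i hi => by
        have := le_max_right dsafe ((drec + dappr) / 2)
        linarith)
      (fun i hi => by
        have := le_max_right dsafe ((drec + dappr) / 2)
        linarith)
      (fun i hi => by
        have := le_max_right dsafe ((drec + dappr) / 2)
        linarith)
      (fun i => by
        have := le_max_left dsafe ((drec + dappr) / 2)
        linarith)
      0
    linarith
end

section
/- Let p, pf, pp, pfp : ℤ → ℝ and dappr, drec : ℤ → ℝ be functions and let vmin, vmax, t0, t1, dsafe be real numbers with t0 < t1. Assume: (1) for all i, if dappr(i) ≤ pf(i) − p(i) then pfp(i) − pp(i) ≤ pf(i) − p(i); (2) for all i, if dappr(i) ≤ pf(i) − p(i) then pp(i) ≤ p(i) + vmax·(t1 − t0); (3) for all i, if dappr(i) ≤ pf(i) − p(i) then dappr(i) ≤ pfp(i) − pp(i); (4) for all i, if pf(i) − p(i) ≤ drec(i) then pf(i) − p(i) ≤ pfp(i) − pp(i); (5) for all i, if pf(i) − p(i) ≤ drec(i) then p(i) + vmin·(t1 − t0) ≤ pp(i); (6) for all i, if pf(i) − p(i) ≤ drec(i) then pfp(i) − pp(i) ≤ drec(i);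 and (7) for all i, dsafe ≤ pf(i) − p(i). If for all i, dsafe ≤ dappr(i) and (dsafe = dappr(i) or dappr(i) ≤ drec(i)), then dsafe ≤ pfp(i) − pp(i) for all i. -/
theorem cars_flow_constraint_sound_parametric
    (p pf pp pfp dappr drec : ℤ → ℝ) (vmin vmax t0 t1 dsafe : ℝ)
    (ht : t0 < t1)
    (h1 : ∀ i, dappr i ≤ pf i - p i → pfp i - pp i ≤ pf i - p i)
    (h2 : ∀ i, dappr i ≤ pf i - p i → pp i ≤ p i + vmax * (t1 - t0))
    (h3 : ∀ i, dappr i ≤ pf i - p i → dappr i ≤ pfp i - pp i)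
    (h4 : ∀ i, pf i - p i ≤ drec i → pf i - p i ≤ pfp i - pp i)
    (h5 : ∀ i, pf i - p i ≤ drec i → p i + vmin * (t1 - t0) ≤ pp i)
    (h6 : ∀ i, pf i - p i ≤ drec i → pfp i - pp i ≤ drec i)
    (h7 : ∀ i, dsafe ≤ pf i - p i)
    (hc : ∀ i, dsafe ≤ dappr i ∧ (dsafe = dappr i ∨ dappr i ≤ drec i)) :
    ∀ i, dsafe ≤ pfp i - pp i := by
  intro i
  obtain ⟨hle, hcase⟩ := hc i
  by_cases h : dappr i ≤ pf i - p i
  · exact le_trans hle (h3 i h)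
  · rcases hcase with heq | hrec
    · exact absurd (heq ▸ h7 i) h
    · exact le_trans (h7 i) (h4 i (le_trans (le_of_not_ge h) hrec))
end

section
/- Let I be a type, pos : I → ℝ, front, sidefront, front' : I → I, dchange : I → ℝ, let i0 : I, and let dsafe be a real number. Assume: (1) for every i, dsafe ≤ pos(front(i)) − pos(i); (2) dchange(i0) < pos(sidefront(i0)) − pos(i0); (3) front'(i0) = sidefront(i0); and (4) front'(i) = front(i) for every i ≠ i0. If dsafe ≤ dchange(i) for every i, then dsafe ≤ pos(front'(i)) − pos(i) for every i. -/
theorem lane_change_constraint_sound_parametric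
    {I : Type*} (pos : I → ℝ) (front sidefront front' : I → I)
    (dchange : I → ℝ) (i0 : I) (dsafe : ℝ)
    (h1 : ∀ i, dsafe ≤ pos (front i) - pos i)
    (h2 : dchange i0 < pos (sidefront i0) - pos i0)
    (h3 : front' i0 = sidefront i0)
    (h4 : ∀ i, i ≠ i0 → front' i = front i)
    (hc : ∀ i, dsafe ≤ dchange i) :
    ∀ i, dsafe ≤ pos (front' i) - pos i := by
  intro i
  by_cases h : i = i0
  · subst h; rw [h3]; linarith [hc i]
  · rw [h4 i h]; exact h1 i
end
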